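/- arXiv:2508.16946 — 4 statements merged into one kernel-verified Lean document; each statement's English description precedes it below -/
import Mathlib

section
/- Let 0 ≤ r₀ < R, let ψ ∈ (0, π), set C = (r₀, 0) ∈ ℝ² and u = (cos ψ, sin ψ). Then there exists a unique t > 0 with ‖C + t·u‖ = R, and for this t one has C + t·u = (R cos ζ, R sin ζ) where ζ = ψ − arcsin(r₀ sin ψ / R). -/
open MeasureTheory Real

/-- The point of the Euclidean plane with Cartesian coordinates `(a, b)`. -/
noncomputable def pt (a b : ℝ) : EuclideanSpace ℝ (Fin 2) :=
  (WithLp.equiv 2 (Fin 2 → ℝ)).symm ![a, b]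

lemma pt_add (a b c d : ℝ) : pt a b + pt c d = pt (a + c) (b + d) := by
  ext i; fin_cases i <;> simp [pt]

lemma pt_smul (t a b : ℝ) : t • pt a b = pt (t * a) (t * b) := by
  ext i; fin_cases i <;> simp [pt]

lemma pt_norm (a b : ℝ) : ‖pt a b‖ = Real.sqrt (a ^ 2 + b ^ 2) := by
  rw [EuclideanSpace.norm_eq]
  simp [pt, Fin.sum_univ_two, sq_abs]

lemma pt_congr {a b c d : ℝ} (h1 : a = c) (h2 : b = d) : pt a b = pt c d := by
  rw [h1, h2]

/-- For a point `C = (r₀, 0)` strictly inside the circle of radius `R` centered at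
the origin, the ray from `C` in direction angle `ψ ∈ (0, π)` meets the circle in a
unique point `C + t·u` with `t > 0`, and that point is `(R cos ζ, R sin ζ)` where
`ζ = ψ − arcsin(r₀ sin ψ / R)`. -/
theorem ray_exits_circle_at_angle
    (R r₀ ψ : ℝ) (hr₀ : 0 ≤ r₀) (hr₀R : r₀ < R) (hψ : ψ ∈ Set.Ioo 0 π)
    (C u : EuclideanSpace ℝ (Fin 2)) (hC : C = pt r₀ 0)
    (hu : u = pt (Real.cos ψ) (Real.sin ψ))
    (ζ : ℝ) (hζ : ζ = ψ - Real.arcsin (r₀ * Real.sin ψ / R)) :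
    (∃! t : ℝ, 0 < t ∧ ‖C + t • u‖ = R) ∧
      ∀ t : ℝ, 0 < t → ‖C + t • u‖ = R →
        C + t • u = pt (R * Real.cos ζ) (R * Real.sin ζ) := by
  obtain ⟨hψ0, hψπ⟩ := hψ
  have hR : 0 < R := lt_of_le_of_lt hr₀ hr₀R
  have hsin : 0 < Real.sin ψ := Real.sin_pos_of_pos_of_lt_pi hψ0 hψπ
  have hsin1 : Real.sin ψ ≤ 1 := Real.sin_le_one ψ
  have hpyth : Real.sin ψ ^ 2 + Real.cos ψ ^ 2 = 1 := Real.sin_sq_add_cos_sq ψ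
  have hrs : r₀ * Real.sin ψ < R :=
    lt_of_le_of_lt (mul_le_of_le_one_right hr₀ hsin1) hr₀R
  have hrs0 : 0 ≤ r₀ * Real.sin ψ := mul_nonneg hr₀ hsin.le
  have hr2 : r₀ ^ 2 < R ^ 2 := by nlinarith
  have hd : 0 < R ^ 2 - (r₀ * Real.sin ψ) ^ 2 := by nlinarith
  obtain ⟨s, hs_def⟩ : ∃ s : ℝ, s = Real.sqrt (R ^ 2 - (r₀ * Real.sin ψ) ^ 2) := ⟨_, rfl⟩
  have hs2 : s ^ 2 = R ^ 2 - (r₀ * Real.sin ψ) ^ 2 := by rw [hs_def]; exact Real.sq_sqrt hd.le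
  have hspos : 0 < s := hs_def ▸ Real.sqrt_pos.mpr hd
  have ht₀ : 0 < s - r₀ * Real.cos ψ := by
    nlinarith [Real.neg_one_le_cos ψ, Real.cos_le_one ψ, sq_nonneg (s - r₀ * Real.cos ψ)]
  have hsum : 0 < s + r₀ * Real.cos ψ := by
    nlinarith [Real.neg_one_le_cos ψ, Real.cos_le_one ψ, sq_nonneg (s + r₀ * Real.cos ψ)]
  have key : ∀ t : ℝ, (‖C + t • u‖ = R ↔
      (t - (s - r₀ * Real.cos ψ)) * (t + (s + r₀ * Real.cos ψ)) = 0) := by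
    intro t
    rw [hC, hu, pt_smul, pt_add, pt_norm]
    rw [show R = Real.sqrt (R ^ 2) from (Real.sqrt_sq hR.le).symm,
      Real.sqrt_inj (by positivity) (sq_nonneg R)]
    constructor <;> intro h
    · linear_combination h - hs2 + (r₀ ^ 2 - t ^ 2) * hpyth
    · linear_combination h + hs2 + (t ^ 2 - r₀ ^ 2) * hpyth
  have ht₀norm : ‖C + (s - r₀ * Real.cos ψ) • u‖ = R := (key _).mpr (by ring)
  have huniq : ∀ t : ℝ, 0 < t → ‖C + t • u‖ = R → t = s - r₀ * Real.cos ψ := by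
    intro t ht h
    rcases mul_eq_zero.mp ((key t).mp h) with h1 | h2
    · linarith
    · linarith
  refine ⟨⟨s - r₀ * Real.cos ψ, ⟨ht₀, ht₀norm⟩, fun t ⟨ht, h⟩ => huniq t ht h⟩, ?_⟩
  intro t ht h
  have htt : t = s - r₀ * Real.cos ψ := huniq t ht h
  subst htt
  rw [hC, hu, pt_smul, pt_add]
  have hx1 : r₀ * Real.sin ψ / R ≤ 1 := by rw [div_le_one hR]; linarith
  have hx0 : (0:ℝ) ≤ r₀ * Real.sin ψ / R := by positivity
  have hsinα : Real.sin (Real.arcsin (r₀ * Real.sin ψ / R)) = r₀ * Real.sin ψ / R :=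
    Real.sin_arcsin (by linarith) hx1
  have hcosα : Real.cos (Real.arcsin (r₀ * Real.sin ψ / R)) = s / R := by
    rw [Real.cos_arcsin,
      show (1 : ℝ) - (r₀ * Real.sin ψ / R) ^ 2 = (R ^ 2 - (r₀ * Real.sin ψ) ^ 2) / R ^ 2 by
        field_simp,
      Real.sqrt_div hd.le, Real.sqrt_sq hR.le, hs_def]
  rw [hζ, Real.cos_sub, Real.sin_sub, hsinα, hcosα]
  apply pt_congr
  · field_simp
    linear_combination (-r₀) * hpyth
  · field_simp
    ring
end

section
/- Let R > 0, R_B > 0 and E ∈ ℝ² with r := ‖E‖ satisfying R_B < r and r + R_B ≤ R. Then the set {ζ ∈ [0, 2π) : the closed segment from the origin to (R cos ζ, R sin ζ) intersects the closed ball of radius R_B centered at E} has one-dimensional Lebesgue measure 2·arcsin(R_B/r); equivalently the corresponding boundary arc has length L₀₁ = 2R·arcsin(R_B/r). -/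
/-!
Write `E = r (cos θ, sin θ)` and `P = R (cos ζ, sin ζ)`. The squared distance from `t • P` to `E`
is a quadratic in `t` with vertex at `t = ⟪E, P⟫ / R²`, which lies in `[0, 1]` because `r ≤ R`.
Hence the segment `[0, P]` meets the blockage exactly when `⟪E, P⟫ ≥ R √(r² - R_B²)`, that is,
when `cos (ζ - θ) ≥ cos α` with `α = arcsin (R_B / r)`. This condition is `2π`-periodic in `ζ`,
so its measure over `[0, 2π)` equals its measure over the period `(θ - π, θ + π]`, where it
carves out the interval `[θ - α, θ + α]`.
-/

open MeasureTheory Real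

open Set Metric RealInnerProductSpace

theorem exists_mem_Icc_quadratic_le_iff {a e q ρ : ℝ} (hρ : 0 ≤ ρ) (hρe : ρ < e) (hea : e ≤ a)
    (hq : q ≤ e * a) :
    (∃ t ∈ Icc (0 : ℝ) 1, t ^ 2 * a ^ 2 - 2 * t * q + e ^ 2 ≤ ρ ^ 2) ↔
      √(e ^ 2 - ρ ^ 2) * a ≤ q := by
  have ha : 0 < a := by linarith
  set c := √(e ^ 2 - ρ ^ 2)
  have hc : c ^ 2 = e ^ 2 - ρ ^ 2 := sq_sqrt (by nlinarith)
  have hc0 : 0 ≤ c := sqrt_nonneg _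
  constructor
  · rintro ⟨t, ⟨ht0, -⟩, ht⟩
    have htpos : 0 < t := ht0.lt_of_ne <| by rintro rfl; nlinarith
    nlinarith [sq_nonneg (t * a - c)]
  · intro hcq
    have hq0 : 0 ≤ q := (mul_nonneg hc0 ha.le).trans hcq
    refine ⟨q / a ^ 2, ⟨by positivity, (div_le_one (by positivity)).2 (by nlinarith)⟩, ?_⟩
    have hval : (q / a ^ 2) ^ 2 * a ^ 2 - 2 * (q / a ^ 2) * q + e ^ 2 = e ^ 2 - q ^ 2 / a ^ 2 := by
      field_simp; ring
    rw [hval, sub_le_comm, le_div_iff₀ (by positivity)]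
    nlinarith [mul_le_mul hcq hcq (mul_nonneg hc0 ha.le) hq0]

theorem segment_zero_inter_closedBall_nonempty_iff {F : Type*} [NormedAddCommGroup F]
    [InnerProductSpace ℝ F] {E P : F} {ρ : ℝ} (hρ : 0 ≤ ρ) (hρE : ρ < ‖E‖) (hEP : ‖E‖ ≤ ‖P‖) :
    (segment ℝ 0 P ∩ closedBall E ρ).Nonempty ↔ √(‖E‖ ^ 2 - ρ ^ 2) * ‖P‖ ≤ ⟪E, P⟫ := by
  have hsq : ∀ t : ℝ, ‖t • P - E‖ ^ 2 = t ^ 2 * ‖P‖ ^ 2 - 2 * t * ⟪E, P⟫ + ‖E‖ ^ 2 := fun t => by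
    rw [norm_sub_sq_real, norm_smul, real_inner_smul_left, real_inner_comm, Real.norm_eq_abs,
      mul_pow, sq_abs]
    ring
  rw [← exists_mem_Icc_quadratic_le_iff hρ hρE hEP (real_inner_le_norm E P), segment_eq_image]
  simp only [smul_zero, zero_add, Set.Nonempty, mem_inter_iff, mem_image, mem_closedBall,
    dist_eq_norm, ← hsq, sq_le_sq₀ (norm_nonneg _) hρ]
  constructor
  · rintro ⟨_, ⟨t, ht, rfl⟩, hle⟩
    exact ⟨t, ht, hle⟩
  · rintro ⟨t, ht, hle⟩
    exact ⟨_, ⟨t, ht, rfl⟩, hle⟩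

theorem sqrt_sq_sub_sq_eq_mul_cos_arcsin {r : ℝ} (hr : 0 ≤ r) (ρ : ℝ) :
    √(r ^ 2 - ρ ^ 2) = r * cos (arcsin (ρ / r)) := by
  rcases hr.eq_or_lt with rfl | hr
  · simp [sqrt_eq_zero_of_nonpos (neg_nonpos.2 (sq_nonneg ρ))]
  rw [cos_arcsin, ← sqrt_sq hr.le, ← sqrt_mul (sq_nonneg r), sqrt_sq hr.le]
  congr 1
  field_simp

theorem inner_pt_pt (a b c d : ℝ) : ⟪pt a b, pt c d⟫ = a * c + b * d := by
  simp [pt, PiLp.inner_apply, Fin.sum_univ_two, mul_comm]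

theorem norm_pt_polar (R ζ : ℝ) : ‖pt (R * cos ζ) (R * sin ζ)‖ = |R| := by
  rw [← sqrt_sq_eq_abs, norm_eq_sqrt_real_inner, inner_pt_pt]
  congr 1
  linear_combination R ^ 2 * cos_sq_add_sin_sq ζ

theorem exists_eq_pt_polar (E : EuclideanSpace ℝ (Fin 2)) :
    ∃ θ, E = pt (‖E‖ * cos θ) (‖E‖ * sin θ) := by
  obtain ⟨z, rfl⟩ := Complex.orthonormalBasisOneI.repr.surjective E
  refine ⟨z.arg, ?_⟩
  rw [LinearIsometryEquiv.norm_map, Complex.norm_mul_cos_arg, Complex.norm_mul_sin_arg]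
  rfl

theorem cos_le_cos_iff_abs_le {α y : ℝ} (hα : 0 ≤ α) (hαπ : α ≤ π) (hy : |y| ≤ π) :
    cos α ≤ cos y ↔ |y| ≤ α := by
  rw [← cos_abs y, strictAntiOn_cos.le_iff_ge ⟨hα, hαπ⟩ ⟨abs_nonneg y, hy⟩]

theorem setOf_cos_le_cos_sub_inter_Ioc {α : ℝ} (hα : 0 ≤ α) (hαπ : α < π) (θ : ℝ) :
    {ζ | cos α ≤ cos (ζ - θ)} ∩ Ioc (θ - π) (θ - π + 2 * π) = Icc (θ - α) (θ + α) := by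
  ext ζ
  simp only [mem_inter_iff, mem_ofPred_eq, mem_Ioc, mem_Icc]
  constructor
  · rintro ⟨hcos, h1, h2⟩
    rw [cos_le_cos_iff_abs_le hα hαπ.le (abs_le.2 ⟨by linarith, by linarith⟩), abs_le] at hcos
    constructor <;> linarith
  · rintro ⟨h1, h2⟩
    rw [cos_le_cos_iff_abs_le hα hαπ.le (abs_le.2 ⟨by linarith, by linarith⟩), abs_le]
    exact ⟨⟨by linarith, by linarith⟩, by linarith, by linarith⟩

theorem volume_setOf_cos_le_cos_sub {α : ℝ} (hα : 0 ≤ α) (hαπ : α < π) (θ : ℝ) :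
    volume {ζ ∈ Ico (0 : ℝ) (2 * π) | cos α ≤ cos (ζ - θ)} = ENNReal.ofReal (2 * α) := by
  set A := {ζ : ℝ | cos α ≤ cos (ζ - θ)}
  have hA : MeasurableSet A := measurableSet_le measurable_const (by fun_prop)
  have hper : ∀ g : AddSubgroup.zmultiples (2 * π), (fun x => g +ᵥ x) ⁻¹' A = A := by
    rintro ⟨_, n, rfl⟩
    ext ζ
    simp only [zsmul_eq_mul, AddSubgroup.vadd_def, vadd_eq_add, add_comm, preimage_ofPred_eq,
      add_sub_assoc, mem_ofPred_eq, A]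
    rw [← add_sub_assoc, add_sub_right_comm, cos_add_int_mul_two_pi]
  have hfd := isAddFundamentalDomain_Ioc two_pi_pos
  calc volume {ζ ∈ Ico (0 : ℝ) (2 * π) | cos α ≤ cos (ζ - θ)}
      = volume (A ∩ Ioc 0 (0 + 2 * π)) := by
        rw [zero_add, inter_comm]
        exact measure_congr (Ico_ae_eq_Ioc.inter (ae_eq_refl A))
    _ = volume (A ∩ Ioc (θ - π) (θ - π + 2 * π)) := (hfd 0).measure_set_eq (hfd _) hA hper
    _ = ENNReal.ofReal (2 * α) := by
        rw [setOf_cos_le_cos_sub_inter_Ioc hα hαπ, volume_Icc]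
        ring_nf

theorem shadow_arc_from_base_station_general
    (R R_B : ℝ) (hRB : 0 < R_B)
    (E : EuclideanSpace ℝ (Fin 2)) (r : ℝ) (hr : r = ‖E‖)
    (hRBr : R_B < r) (hrR : r + R_B ≤ R) :
    volume {ζ ∈ Set.Ico (0 : ℝ) (2 * π) |
        (segment ℝ 0 (pt (R * Real.cos ζ) (R * Real.sin ζ)) ∩
          Metric.closedBall E R_B).Nonempty} =
      ENNReal.ofReal (2 * Real.arcsin (R_B / r)) := by
  subst hr
  obtain ⟨θ, hE⟩ := exists_eq_pt_polar E
  have hshadow : ∀ ζ, (segment ℝ 0 (pt (R * cos ζ) (R * sin ζ)) ∩ closedBall E R_B).Nonempty ↔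
      cos (arcsin (R_B / ‖E‖)) ≤ cos (ζ - θ) := fun ζ => by
    have hP : ‖pt (R * cos ζ) (R * sin ζ)‖ = R :=
      (norm_pt_polar R ζ).trans (abs_of_pos (by linarith))
    have hinner : ⟪E, pt (R * cos ζ) (R * sin ζ)⟫ = ‖E‖ * R * cos (ζ - θ) := by
      conv_lhs => rw [hE]
      rw [inner_pt_pt, cos_sub]
      ring
    rw [segment_zero_inter_closedBall_nonempty_iff hRB.le hRBr (by linarith), hP, hinner,
      sqrt_sq_sub_sq_eq_mul_cos_arcsin (norm_nonneg E), mul_right_comm,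
      mul_le_mul_iff_right₀ (by nlinarith)]
  simp_rw [hshadow]
  exact volume_setOf_cos_le_cos_sub (arcsin_nonneg.2 (by positivity))
    ((arcsin_le_pi_div_two _).trans_lt (by linarith [pi_pos])) θ

/-- Shadow arc of a circular blockage seen from the base station at the origin
(equation (3) of the paper): the set of polar angles `ζ ∈ [0, 2π)` of boundary
points of the disk of radius `R` whose line-of-sight segment to the origin meets
the closed blockage ball of radius `R_B` centered at `E` (with `r = ‖E‖`,
`R_B < r`, `r + R_B ≤ R`) has one-dimensional Lebesgue measure `2·arcsin(R_B/r)`;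
the corresponding boundary arc has length `L₀₁ = 2R·arcsin(R_B/r)`. -/
theorem shadow_arc_from_base_station
    (R R_B : ℝ) (hR : 0 < R) (hRB : 0 < R_B)
    (E : EuclideanSpace ℝ (Fin 2)) (r : ℝ) (hr : r = ‖E‖)
    (hRBr : R_B < r) (hrR : r + R_B ≤ R) :
    volume {ζ ∈ Set.Ico (0 : ℝ) (2 * π) |
        (segment ℝ 0 (pt (R * Real.cos ζ) (R * Real.sin ζ)) ∩
          Metric.closedBall E R_B).Nonempty} =
      ENNReal.ofReal (2 * Real.arcsin (R_B / r)) :=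
  shadow_arc_from_base_station_general R R_B hRB E r hr hRBr hrR
end

section
/- Fix n ∈ ℕ, constants c ≥ 0, m > 0, Ω > 0, a bounded measurable function g : [0, 2π) → [0, ∞) and a measurable function p : [0, 2π) → [0, 1]. Let (φ_i)_{i=1}^{n} be i.i.d. uniform on [0, 2π), let (h_i)_{i=1}^{n} be i.i.d. with the Gamma distribution of shape m and rate m/Ω, and let (U_i)_{i=1}^{n} be i.i.d. uniform on [0, 1], with the three families mutually independent; set I_i = 1{U_i ≤ p(φ_i)} and T = c − Σ_{i=1}^{n} g(φ_i)·h_i·I_i. Then for every s ≥ 0 with s·(sup g)·Ω/m < 1, the Laplace transform of T satisfies E[exp(−sT)] = e^{−sc} · ( (1/(2π)) ∫₀^{2π} [ 1 − p(φ) + p(φ)·(1 − s·g(φ)·Ω/m)^{−m} ] dφ )ⁿ. -/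
/-!
Conditionally on its angle `φ`, the `i`-th summand `g(φ)·h·1{U ≤ p(φ)}` has moment generating
function `1 − p(φ) + p(φ)·E[e^{s g(φ) h}]`, and tilting the Gamma density by `e^{y h}` shows
`E[e^{y h}] = (1 − y Ω/m)^{−m}` for `y < m/Ω`. Grouping the `3n` independent variables into the
`n` independent triples `(φᵢ, hᵢ, Uᵢ)` makes the summands independent, so the moment generating
function of their sum is the `n`-th power of the single-summand one averaged over `φ`.
-/

open MeasureTheory ProbabilityTheory Real Set
open scoped ENNReal

lemma gammaPDFReal_mul_exp {a r t : ℝ} (hr : 0 ≤ r) (htr : t < r) (x : ℝ) :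
    gammaPDFReal a r x * exp (t * x) = (r / (r - t)) ^ a * gammaPDFReal a (r - t) x := by
  have hrt : 0 < r - t := by linarith
  unfold gammaPDFReal
  split_ifs
  · rw [div_rpow hr hrt.le, mul_assoc, ← exp_add]
    field_simp [(rpow_pos_of_pos hrt a).ne']
    ring_nf
  · simp

lemma lintegral_exp_mul_gammaMeasure {a r t : ℝ} (ha : 0 < a) (hr : 0 < r) (htr : t < r) :
    ∫⁻ x, ENNReal.ofReal (exp (t * x)) ∂gammaMeasure a r =
      ENNReal.ofReal ((1 - t / r) ^ (-a)) := by
  have hrt : 0 < r - t := by linarith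
  have hconst : (r / (r - t)) ^ a = (1 - t / r) ^ (-a) := by
    rw [one_sub_div hr.ne', rpow_neg (div_pos hrt hr).le, ← inv_rpow (div_pos hrt hr).le,
      inv_div]
  have hpdf : ∀ b, Measurable (gammaPDF a b) :=
    fun b ↦ (measurable_gammaPDFReal a b).ennreal_ofReal
  rw [gammaMeasure, lintegral_withDensity_eq_lintegral_mul _ (hpdf r) (by fun_prop)]
  have hpt : ∀ x, gammaPDF a r x * ENNReal.ofReal (exp (t * x)) =
      ENNReal.ofReal ((r / (r - t)) ^ a) * gammaPDF a (r - t) x := fun x ↦ by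
    rw [gammaPDF, gammaPDF, ← ENNReal.ofReal_mul (gammaPDFReal_nonneg ha hr _),
      ← ENNReal.ofReal_mul (by positivity), gammaPDFReal_mul_exp hr.le htr]
  simp_rw [Pi.mul_apply, hpt]
  rw [lintegral_const_mul _ (hpdf _), lintegral_gammaPDF_eq_one ha hrt, mul_one, hconst]

lemma setLIntegral_Icc_zero_one_ite_le {q : ℝ} (hq : q ∈ Icc (0 : ℝ) 1) (a b : ℝ≥0∞) :
    ∫⁻ u in Icc (0 : ℝ) 1, (if u ≤ q then a else b) =
      ENNReal.ofReal q * a + ENNReal.ofReal (1 - q) * b := by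
  rw [← Icc_union_Ioc_eq_Icc hq.1 hq.2, lintegral_union measurableSet_Ioc
    ((Iic_disjoint_Ioc le_rfl).mono Icc_subset_Iic_self le_rfl),
    setLIntegral_congr_fun measurableSet_Icc (fun u hu ↦ if_pos hu.2),
    setLIntegral_congr_fun measurableSet_Ioc (fun u hu ↦ if_neg (not_le.mpr hu.1)),
    setLIntegral_const, setLIntegral_const, Real.volume_Icc, Real.volume_Ioc, sub_zero,
    mul_comm a, mul_comm b]

lemma lintegral_exp_mul_mul_ite_gammaMeasure_prod {a r y q : ℝ} (ha : 0 < a) (hr : 0 < r)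
    (hyr : y < r) (hq : q ∈ Icc (0 : ℝ) 1) :
    ∫⁻ x, ENNReal.ofReal (exp (y * x.1 * if x.2 ≤ q then 1 else 0))
        ∂(gammaMeasure a r).prod (volume.restrict (Icc (0 : ℝ) 1)) =
      ENNReal.ofReal (1 - q + q * (1 - y / r) ^ (-a)) := by
  have := isProbabilityMeasure_gammaMeasure ha hr
  have hinner : ∀ h : ℝ,
      ∫⁻ u in Icc (0 : ℝ) 1, ENNReal.ofReal (exp (y * h * if u ≤ q then 1 else 0)) =
        ENNReal.ofReal q * ENNReal.ofReal (exp (y * h)) + ENNReal.ofReal (1 - q) * 1 :=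
    fun h ↦ by
      rw [← setLIntegral_Icc_zero_one_ite_le hq]
      congr with u
      split_ifs <;> simp
  have hind : Measurable fun x : ℝ × ℝ ↦ if x.2 ≤ q then (1 : ℝ) else 0 :=
    Measurable.ite (measurableSet_le measurable_snd measurable_const) measurable_const
      measurable_const
  have hbase : 0 < 1 - y / r := sub_pos.2 ((div_lt_one hr).2 hyr)
  rw [lintegral_prod _ (by fun_prop)]
  simp_rw [hinner]
  rw [lintegral_add_right _ measurable_const, lintegral_const_mul _ (by fun_prop),
    lintegral_exp_mul_gammaMeasure ha hr hyr, lintegral_const, measure_univ, mul_one, mul_one,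
    ← ENNReal.ofReal_mul hq.1,
    ← ENNReal.ofReal_add (mul_nonneg hq.1 (rpow_nonneg hbase.le _)) (by linarith [hq.2]), add_comm]

lemma mgf_mul_mul_ite_prod_gammaMeasure {ν : Measure ℝ} [IsFiniteMeasure ν] {a r t Y : ℝ}
    {g q : ℝ → ℝ} (ha : 0 < a) (hr : 0 < r) (hg : Measurable g) (hq : Measurable q)
    (hq01 : ∀ φ, q φ ∈ Icc (0 : ℝ) 1) (hYr : Y < r) (htg : ∀ φ, t * g φ ≤ Y) :
    mgf (fun x : ℝ × ℝ × ℝ ↦ g x.1 * x.2.1 * if x.2.2 ≤ q x.1 then 1 else 0)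
        (ν.prod ((gammaMeasure a r).prod (volume.restrict (Icc (0 : ℝ) 1)))) t =
      ∫ φ, (1 - q φ + q φ * (1 - t * g φ / r) ^ (-a)) ∂ν := by
  have := isProbabilityMeasure_gammaMeasure ha hr
  set W : ℝ → ℝ := fun φ ↦ 1 - q φ + q φ * (1 - t * g φ / r) ^ (-a)
  have hbase : ∀ φ, 1 - Y / r ≤ 1 - t * g φ / r := fun φ ↦ by
    gcongr; exact htg φ
  have hYpos : 0 < 1 - Y / r := sub_pos.2 ((div_lt_one hr).2 hYr)
  have hpow : ∀ φ, 0 ≤ (1 - t * g φ / r) ^ (-a) ∧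
      (1 - t * g φ / r) ^ (-a) ≤ (1 - Y / r) ^ (-a) := fun φ ↦
    ⟨rpow_nonneg (hYpos.trans_le (hbase φ)).le _,
      rpow_le_rpow_of_nonpos hYpos (hbase φ) (neg_nonpos.2 ha.le)⟩
  have hW0 : ∀ φ, 0 ≤ W φ := fun φ ↦ by
    have := mul_nonneg (hq01 φ).1 (hpow φ).1
    linarith [(hq01 φ).2]
  have hWint : Integrable W ν := by
    refine Integrable.of_bound (by fun_prop) (1 + (1 - Y / r) ^ (-a)) (ae_of_all _ fun φ ↦ ?_)
    have := mul_le_mul (hq01 φ).2 (hpow φ).2 (hpow φ).1 zero_le_one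
    rw [norm_of_nonneg (hW0 φ)]
    linarith [(hq01 φ).1]
  have hinner : ∀ φ, ∫⁻ x, ENNReal.ofReal (exp (t * (g φ * x.1 * if x.2 ≤ q φ then 1 else 0)))
      ∂(gammaMeasure a r).prod (volume.restrict (Icc (0 : ℝ) 1)) = ENNReal.ofReal (W φ) :=
    fun φ ↦ by
      simp_rw [← mul_assoc]
      exact lintegral_exp_mul_mul_ite_gammaMeasure_prod ha hr ((htg φ).trans_lt hYr) (hq01 φ)
  have hind : Measurable fun x : ℝ × ℝ × ℝ ↦ if x.2.2 ≤ q x.1 then (1 : ℝ) else 0 :=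
    Measurable.ite (measurableSet_le (by fun_prop) (by fun_prop)) measurable_const
      measurable_const
  rw [mgf, integral_eq_lintegral_of_nonneg_ae (ae_of_all _ fun _ ↦ (exp_pos _).le)
    (by fun_prop), lintegral_prod _ (by fun_prop)]
  simp_rw [hinner]
  rw [← ofReal_integral_eq_lintegral_ofReal hWint (ae_of_all _ hW0),
    ENNReal.toReal_ofReal (integral_nonneg hW0)]

namespace ProbabilityTheory

variable {Ω ι : Type*} {mΩ : MeasurableSpace Ω} {P : Measure Ω}

lemma iIndepFun.curry {κ 𝓧 : Type*} [MeasurableSpace 𝓧] {X : ι → κ → Ω → 𝓧}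
    (mX : ∀ i j, Measurable (X i j)) (h : iIndepFun (fun p : ι × κ ↦ X p.1 p.2) P) :
    iIndepFun (fun i ω j ↦ X i j ω) P := by
  have := h.isProbabilityMeasure
  have : ∀ i j, IsProbabilityMeasure (P.map (X i j)) :=
    fun i j ↦ Measure.isProbabilityMeasure_map (mX i j).aemeasurable
  have hrow : ∀ i, P.map (fun ω j ↦ X i j ω) = Measure.infinitePi fun j ↦ P.map (X i j) :=
    fun i ↦ (h.precomp (Prod.mk_right_injective i)).map_fun_eq_infinitePi_map (mX i)
  rw [iIndepFun_iff_map_fun_eq_infinitePi_map (fun i ↦ by fun_prop)]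
  simp_rw [hrow]
  have hjoint := h.map_fun_eq_infinitePi_map (fun p : ι × κ ↦ mX p.1 p.2)
  rw [← Measure.infinitePi_map_curry (fun i j ↦ P.map (X i j)), ← hjoint,
    Measure.map_map (by fun_prop) (by fun_prop)]
  rfl

lemma iIndepFun.map_prodMk_prodMk_eq_prod {β : ι → Type*} [∀ i, MeasurableSpace (β i)]
    {f : ∀ i, Ω → β i} (h : iIndepFun f P) (hf : ∀ i, Measurable (f i)) {i j k : ι}
    (hij : i ≠ j) (hik : i ≠ k) (hjk : j ≠ k) :
    P.map (fun ω ↦ (f i ω, f j ω, f k ω)) =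
      (P.map (f i)).prod ((P.map (f j)).prod (P.map (f k))) := by
  have := h.isProbabilityMeasure
  rw [(h.indepFun_prodMk hf j k i hij.symm hik.symm).symm.map_prod_eq_prod_map_map
    (hf i).aemeasurable ((hf j).prodMk (hf k)).aemeasurable,
    (h.indepFun hjk).map_prod_eq_prod_map_map (hf j).aemeasurable (hf k).aemeasurable]

end ProbabilityTheory

theorem laplace_transform_aggregate_ris_power_general
    {Ω' : Type*} [MeasureSpace Ω'] [IsProbabilityMeasure (ℙ : Measure Ω')]
    (n : ℕ) (c m Ω : ℝ) (hm : 0 < m) (hΩ : 0 < Ω)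
    (g p : ℝ → ℝ) (hg : Measurable g)
    (G : ℝ) (hgbdd : ∀ x, g x ≤ G)
    (hp : Measurable p) (hp01 : ∀ x, p x ∈ Set.Icc (0 : ℝ) 1)
    (Φ H U : Fin n → Ω' → ℝ)
    (hΦmeas : ∀ i, Measurable (Φ i)) (hHmeas : ∀ i, Measurable (H i))
    (hUmeas : ∀ i, Measurable (U i))
    (hindep : iIndepFun
      (fun j : Fin 3 × Fin n => ![Φ, H, U] j.1 j.2) ℙ)
    (hΦlaw : ∀ i, Measure.map (Φ i) ℙ =
      (volume (Set.Ico (0 : ℝ) (2 * π)))⁻¹ • volume.restrict (Set.Ico 0 (2 * π)))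
    (hHlaw : ∀ i, Measure.map (H i) ℙ = gammaMeasure m (m / Ω))
    (hUlaw : ∀ i, Measure.map (U i) ℙ = volume.restrict (Set.Icc (0 : ℝ) 1))
    (T : Ω' → ℝ)
    (hT : ∀ ω, T ω = c - ∑ i, g (Φ i ω) * H i ω *
      (if U i ω ≤ p (Φ i ω) then 1 else 0))
    (s : ℝ) (hs : 0 ≤ s) (hsG : s * G * Ω / m < 1) :
    ∫ ω, Real.exp (-(s * T ω)) ∂ℙ =
      Real.exp (-(s * c)) *
        ((1 / (2 * π)) * ∫ φ in Set.Ico (0 : ℝ) (2 * π),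
          (1 - p φ + p φ * (1 - s * g φ * Ω / m) ^ (-m))) ^ n := by
  set F : ℝ × ℝ × ℝ → ℝ := fun x ↦ g x.1 * x.2.1 * if x.2.2 ≤ p x.1 then 1 else 0
  have hF : Measurable F := (hg.comp measurable_fst).mul (measurable_fst.comp measurable_snd)
    |>.mul (Measurable.ite (measurableSet_le (by fun_prop) (by fun_prop)) measurable_const
      measurable_const)
  set V : Fin n → Ω' → ℝ × ℝ × ℝ := fun i ω ↦ (Φ i ω, H i ω, U i ω)
  have hmeas : ∀ j : Fin 3 × Fin n, Measurable (![Φ, H, U] j.1 j.2) := by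
    rintro ⟨k, i⟩
    fin_cases k
    exacts [hΦmeas i, hHmeas i, hUmeas i]
  have hVmeas : ∀ i, Measurable (V i) :=
    fun i ↦ (hΦmeas i).prodMk ((hHmeas i).prodMk (hUmeas i))
  -- `![Φ, H, U] k i` reduces to `Φ i`, `H i`, `U i`, so the grouped rows compose to `F ∘ V i`.
  have hindepV : iIndepFun (fun i ↦ F ∘ V i) ℙ :=
    ((hindep.precomp Prod.swap_injective).curry fun i k ↦ hmeas (k, i)).comp
      (fun _ v ↦ F (v 0, v 1, v 2)) (fun _ ↦ hF.comp (by fun_prop))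
  have hlawV : ∀ i, Measure.map (V i) ℙ = (Measure.map (Φ i) ℙ).prod
      ((gammaMeasure m (m / Ω)).prod (volume.restrict (Icc (0 : ℝ) 1))) :=
    fun i ↦ by
      rw [← hHlaw i, ← hUlaw i]
      exact hindep.map_prodMk_prodMk_eq_prod hmeas (i := (0, i)) (j := (1, i)) (k := (2, i))
        (by simp) (by simp) (by simp)
  have hsGr : s * G < m / Ω := by
    rw [lt_div_iff₀ hΩ]
    rwa [div_lt_one hm] at hsG
  have hmgfV : ∀ i, mgf (F ∘ V i) ℙ s = (1 / (2 * π)) * ∫ φ in Set.Ico (0 : ℝ) (2 * π),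
      (1 - p φ + p φ * (1 - s * g φ * Ω / m) ^ (-m)) := fun i ↦ by
    rw [← mgf_map (hVmeas i).aemeasurable (by fun_prop), hlawV i,
      mgf_mul_mul_ite_prod_gammaMeasure hm (by positivity) hg hp hp01 hsGr
        (fun φ ↦ mul_le_mul_of_nonneg_left (hgbdd φ) hs),
      hΦlaw i, integral_smul_measure, Real.volume_Ico, sub_zero,
      ENNReal.toReal_inv, ENNReal.toReal_ofReal (by positivity), smul_eq_mul, one_div]
    simp_rw [div_div_eq_mul_div]
  calc ∫ ω, exp (-(s * T ω)) ∂ℙ = exp (-(s * c)) * mgf (∑ i, F ∘ V i) ℙ s := by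
        rw [mgf, ← integral_const_mul]
        congr with ω
        rw [hT ω, Finset.sum_apply, ← exp_add]
        simp only [Function.comp_apply, F, V]
        congr 1
        ring
    _ = _ := by
        rw [hindepV.mgf_sum (fun i ↦ hF.comp (hVmeas i)),
          Finset.prod_congr rfl fun i _ ↦ hmgfV i, Finset.prod_const, Finset.card_univ,
          Fintype.card_fin]

/-- Laplace transform of `T = c − Σᵢ g(φᵢ)·hᵢ·Iᵢ` (Lemma 5 of the paper): with
`φᵢ` i.i.d. uniform on `[0, 2π)`, `hᵢ` i.i.d. Gamma of shape `m` and rate `m/Ω`,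
`Uᵢ` i.i.d. uniform on `[0, 1]`, all `3n` variables mutually independent, and
`Iᵢ = 1{Uᵢ ≤ p(φᵢ)}`, for every `s ≥ 0` with `s·(sup g)·Ω/m < 1` one has
`E[e^{−sT}] = e^{−sc}·((1/2π)∫₀^{2π}[1 − p(φ) + p(φ)(1 − s g(φ) Ω/m)^{−m}]dφ)ⁿ`. -/
theorem laplace_transform_aggregate_ris_power
    {Ω' : Type*} [MeasureSpace Ω'] [IsProbabilityMeasure (ℙ : Measure Ω')]
    (n : ℕ) (c m Ω : ℝ) (hc : 0 ≤ c) (hm : 0 < m) (hΩ : 0 < Ω)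
    (g p : ℝ → ℝ) (hg : Measurable g) (hgnonneg : ∀ x, 0 ≤ g x)
    (G : ℝ) (hgbdd : ∀ x, g x ≤ G)
    (hp : Measurable p) (hp01 : ∀ x, p x ∈ Set.Icc (0 : ℝ) 1)
    (Φ H U : Fin n → Ω' → ℝ)
    (hΦmeas : ∀ i, Measurable (Φ i)) (hHmeas : ∀ i, Measurable (H i))
    (hUmeas : ∀ i, Measurable (U i))
    (hindep : iIndepFun
      (fun j : Fin 3 × Fin n => ![Φ, H, U] j.1 j.2) ℙ)
    (hΦlaw : ∀ i, Measure.map (Φ i) ℙ =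
      (volume (Set.Ico (0 : ℝ) (2 * π)))⁻¹ • volume.restrict (Set.Ico 0 (2 * π)))
    (hHlaw : ∀ i, Measure.map (H i) ℙ = gammaMeasure m (m / Ω))
    (hUlaw : ∀ i, Measure.map (U i) ℙ = volume.restrict (Set.Icc (0 : ℝ) 1))
    (T : Ω' → ℝ)
    (hT : ∀ ω, T ω = c - ∑ i, g (Φ i ω) * H i ω *
      (if U i ω ≤ p (Φ i ω) then 1 else 0))
    (s : ℝ) (hs : 0 ≤ s) (hsG : s * G * Ω / m < 1) :
    ∫ ω, Real.exp (-(s * T ω)) ∂ℙ =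
      Real.exp (-(s * c)) *
        ((1 / (2 * π)) * ∫ φ in Set.Ico (0 : ℝ) (2 * π),
          (1 - p φ + p φ * (1 - s * g φ * Ω / m) ^ (-m))) ^ n :=
  laplace_transform_aggregate_ris_power_general n c m Ω hm hΩ g p hg G hgbdd hp hp01 Φ H U hΦmeas
    hHmeas hUmeas hindep hΦlaw hHlaw hUlaw T hT s hs hsG
end

section
/- Let m ≥ 1 be an integer and let X be a random variable with the Gamma distribution of shape m and rate m (so that E[X] = 1). Set η = m·(m!)^{−1/m}. Then for every x ≥ 0, P(X > x) ≤ 1 − (1 − e^{−ηx})^m = Σ_{n=1}^{m} (−1)^{n+1} · C(m, n) · e^{−nηx}, where C(m, n) denotes the binomial coefficient. -/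
open MeasureTheory ProbabilityTheory Real

/-!
Let `F` be the distribution function of `X`. The gap `g(x) = F(x) - (1 - e^{-ηx})^m` vanishes
at `0` and at `∞`. Split `η = β + γ` with `β (m - 1) = m - η`; the normalisation
`η^m m! = m^m` makes `g'(x)` a positive multiple of `(ηx e^{-βx})^{m-1} - (1 - e^{-ηx})^{m-1}`,
whose sign is that of `q(x) = ηx + e^{-γx} - e^{βx}`. The bound `m! < ((m+1)/2)^m` gives
`0 < β < γ`, so the decreasing function `q''` changes sign once; as `q(0) = q'(0) = 0`, first `q'`
and then `q` change sign once, from `+` to `-`. Hence `g` increases and then decreases, and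
`g ≥ 0`.
-/

open Set Filter Topology Nat

def NonnegThenNonpos (f : ℝ → ℝ) (a x₀ : ℝ) : Prop :=
  a ≤ x₀ ∧ (∀ x ∈ Icc a x₀, 0 ≤ f x) ∧ ∀ x ∈ Ici x₀, f x ≤ 0

namespace NonnegThenNonpos

variable {f g : ℝ → ℝ} {a x₀ : ℝ}

lemma of_sign (h : NonnegThenNonpos f a x₀) (hpos : ∀ x, a ≤ x → 0 ≤ f x → 0 ≤ g x)
    (hneg : ∀ x, a ≤ x → f x ≤ 0 → g x ≤ 0) : NonnegThenNonpos g a x₀ :=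
  ⟨h.1, fun x hx ↦ hpos x hx.1 (h.2.1 x hx),
    fun x hx ↦ hneg x (h.1.trans hx) (h.2.2 x hx)⟩

lemma monotoneOn_antitoneOn {f' : ℝ → ℝ} (hf : ∀ x, HasDerivAt f (f' x) x)
    (h : NonnegThenNonpos f' a x₀) : MonotoneOn f (Icc a x₀) ∧ AntitoneOn f (Ici x₀) := by
  have hc : Continuous f := continuous_iff_continuousAt.2 fun x ↦ (hf x).continuousAt
  refine ⟨monotoneOn_of_hasDerivWithinAt_nonneg (convex_Icc a x₀) hc.continuousOn
    (fun x _ ↦ (hf x).hasDerivWithinAt) fun x hx ↦ h.2.1 x (interior_subset hx),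
    antitoneOn_of_hasDerivWithinAt_nonpos (convex_Ici x₀) hc.continuousOn
    (fun x _ ↦ (hf x).hasDerivWithinAt) fun x hx ↦ h.2.2 x (interior_subset hx)⟩

end NonnegThenNonpos

section SignChange

variable {f f' : ℝ → ℝ} {a b c : ℝ}

lemma exists_nonnegThenNonpos_of_antitoneOn (hf : Continuous f) (hac : a ≤ c)
    (hpos : ∀ x ∈ Icc a c, 0 ≤ f x) (hanti : AntitoneOn f (Ici c)) (hcb : c ≤ b)
    (hb : f b ≤ 0) : ∃ x₀, NonnegThenNonpos f a x₀ := by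
  obtain ⟨x₀, ⟨hcx₀, -⟩, hx₀⟩ :=
    intermediate_value_Icc' hcb hf.continuousOn ⟨hb, hpos c ⟨hac, le_rfl⟩⟩
  refine ⟨x₀, hac.trans hcx₀, fun x hx ↦ ?_, fun x hx ↦ hx₀ ▸ hanti (mem_Ici.2 hcx₀)
    (mem_Ici.2 (hcx₀.trans hx)) hx⟩
  rcases le_total x c with hxc | hcx
  · exact hpos x ⟨hx.1, hxc⟩
  · exact hx₀ ▸ hanti (mem_Ici.2 hcx) (mem_Ici.2 hcx₀) hx.2

lemma exists_nonnegThenNonpos_of_deriv (hf : ∀ x, HasDerivAt f (f' x) x)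
    (hf' : NonnegThenNonpos f' a c) (ha : 0 ≤ f a) (hcb : c ≤ b) (hb : f b ≤ 0) :
    ∃ x₀, NonnegThenNonpos f a x₀ := by
  obtain ⟨hmono, hanti⟩ := hf'.monotoneOn_antitoneOn hf
  exact exists_nonnegThenNonpos_of_antitoneOn
    (continuous_iff_continuousAt.2 fun x ↦ (hf x).continuousAt) hf'.1
    (fun x hx ↦ ha.trans (hmono ⟨le_rfl, hf'.1⟩ hx hx.1)) hanti hcb hb

lemma nonneg_of_deriv_nonnegThenNonpos (hf : ∀ x, HasDerivAt f (f' x) x)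
    (hf' : NonnegThenNonpos f' a c) (ha : 0 ≤ f a) (hlim : Tendsto f atTop (𝓝 0))
    {x : ℝ} (hx : a ≤ x) : 0 ≤ f x := by
  obtain ⟨hmono, hanti⟩ := hf'.monotoneOn_antitoneOn hf
  rcases le_total x c with hxc | hcx
  · exact ha.trans (hmono ⟨le_rfl, hf'.1⟩ ⟨hx, hxc⟩ hx)
  · exact le_of_tendsto hlim <| (eventually_ge_atTop x).mono fun y hy ↦
      hanti (mem_Ici.2 hcx) (mem_Ici.2 (hcx.trans hy)) hy

end SignChange

lemma hasDerivAt_exp_mul (k x : ℝ) : HasDerivAt (fun x ↦ exp (k * x)) (k * exp (k * x)) x := by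
  simpa [mul_comm] using ((hasDerivAt_id x).const_mul k).exp

section ExpSignChange

variable {β γ : ℝ}

lemma exists_nonnegThenNonpos_sq_mul_exp_sub (hβ : 0 < β) (hβγ : β < γ) :
    ∃ c, NonnegThenNonpos (fun x ↦ γ ^ 2 * exp (-γ * x) - β ^ 2 * exp (β * x)) 0 c := by
  have hγ : 0 < γ := hβ.trans hβγ
  have hanti : Antitone fun x ↦ γ ^ 2 * exp (-γ * x) - β ^ 2 * exp (β * x) := fun x y hxy ↦
    sub_le_sub (mul_le_mul_of_nonneg_left (exp_le_exp.2 (by nlinarith)) (sq_nonneg γ))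
      (mul_le_mul_of_nonneg_left (exp_le_exp.2 (by nlinarith)) (sq_nonneg β))
  refine exists_nonnegThenNonpos_of_antitoneOn (b := γ ^ 2 / β ^ 3) (by fun_prop) le_rfl
    ?_ (hanti.antitoneOn _) (by positivity) ?_
  · rintro x ⟨h0, h0'⟩
    obtain rfl := le_antisymm h0' h0
    simp only [mul_zero, exp_zero]
    nlinarith
  · have h1 := add_one_le_exp (β * (γ ^ 2 / β ^ 3))
    have h2 : exp (-γ * (γ ^ 2 / β ^ 3)) ≤ 1 :=
      exp_le_one_iff.2 (by rw [neg_mul]; exact neg_nonpos.2 (by positivity))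
    have h3 : β ^ 2 * (β * (γ ^ 2 / β ^ 3)) = γ ^ 2 := by field_simp
    nlinarith

lemma exists_nonnegThenNonpos_add_sub_mul_exp_sub (hβ : 0 < β) (hβγ : β < γ) :
    ∃ c, NonnegThenNonpos (fun x ↦ β + γ - γ * exp (-γ * x) - β * exp (β * x)) 0 c := by
  have hderiv (x : ℝ) : HasDerivAt (fun x ↦ β + γ - γ * exp (-γ * x) - β * exp (β * x))
      (γ ^ 2 * exp (-γ * x) - β ^ 2 * exp (β * x)) x :=
    (((hasDerivAt_const x (β + γ)).sub ((hasDerivAt_exp_mul (-γ) x).const_mul γ)).sub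
      ((hasDerivAt_exp_mul β x).const_mul β)).congr_deriv (by ring)
  obtain ⟨c, hc⟩ := exists_nonnegThenNonpos_sq_mul_exp_sub hβ hβγ
  set b := max c (γ / β ^ 2)
  refine exists_nonnegThenNonpos_of_deriv (b := b) hderiv hc (by simp) (le_max_left _ _) ?_
  have h1 := add_one_le_exp (β * b)
  have h2 : γ ≤ β ^ 2 * b := by
    rw [← div_le_iff₀' (by positivity)]; exact le_max_right _ _
  nlinarith [exp_pos (-γ * b)]

lemma exists_nonnegThenNonpos_mul_add_exp_sub_exp (hβ : 0 < β) (hβγ : β < γ) :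
    ∃ x₀, NonnegThenNonpos (fun x ↦ (β + γ) * x + exp (-γ * x) - exp (β * x)) 0 x₀ := by
  have hderiv (x : ℝ) : HasDerivAt (fun x ↦ (β + γ) * x + exp (-γ * x) - exp (β * x))
      (β + γ - γ * exp (-γ * x) - β * exp (β * x)) x :=
    ((((hasDerivAt_id' x).const_mul (β + γ)).add (hasDerivAt_exp_mul (-γ) x)).sub
      (hasDerivAt_exp_mul β x)).congr_deriv (by ring)
  obtain ⟨x₁, hx₁⟩ := exists_nonnegThenNonpos_add_sub_mul_exp_sub hβ hβγ
  set b := max x₁ (2 * γ / β ^ 2)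
  refine exists_nonnegThenNonpos_of_deriv (b := b) hderiv hx₁ (by simp) (le_max_left _ _) ?_
  have hb0 : 0 ≤ b := hx₁.1.trans (le_max_left _ _)
  have h1 := quadratic_le_exp_of_nonneg (mul_nonneg hβ.le hb0)
  have h2 : 2 * γ ≤ β ^ 2 * b := by
    rw [← div_le_iff₀' (by positivity)]; exact le_max_right _ _
  have h3 : exp (-γ * b) ≤ 1 := exp_le_one_iff.2 (by nlinarith)
  nlinarith

end ExpSignChange

lemma factorial_lt_half_succ_pow {n : ℕ} (hn : 2 ≤ n) : (n ! : ℝ) < ((n + 1) / 2) ^ n := by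
  induction n, hn using Nat.le_induction with
  | base => norm_num [Nat.factorial]
  | succ n hn ih =>
    have hn0 : (0 : ℝ) < n + 1 := by positivity
    have hbern : (2 : ℝ) ≤ (1 + 1 / (n + 1)) ^ (n + 1) := by
      have := one_add_mul_le_pow (a := 1 / ((n : ℝ) + 1)) (by linarith [one_div_pos.2 hn0]) (n + 1)
      rwa [Nat.cast_succ, mul_one_div_cancel hn0.ne', one_add_one_eq_two] at this
    calc ((n + 1)! : ℝ) = (n + 1) * n ! := by push_cast [Nat.factorial_succ]; ring
      _ < (n + 1) * ((n + 1) / 2) ^ n := by gcongr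
      _ = 2 * ((n + 1) / 2) ^ (n + 1) := by ring
      _ ≤ (1 + 1 / (n + 1)) ^ (n + 1) * ((n + 1) / 2) ^ (n + 1) := by gcongr
      _ = ((↑(n + 1) + 1) / 2) ^ (n + 1) := by
        rw [← mul_pow]; congr 1; field_simp; push_cast; ring

lemma mul_rpow_neg_inv_pow_mul {x : ℝ} (hx : 0 < x) (c : ℝ) {n : ℕ} (hn : n ≠ 0) :
    (c * x ^ (-(1 / (n : ℝ)))) ^ n * x = c ^ n := by
  rw [mul_pow, ← rpow_natCast (x ^ _), ← rpow_mul hx.le, neg_mul, one_div_mul_cancel (by simpa),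
    rpow_neg_one, mul_assoc, inv_mul_cancel₀ hx.ne', mul_one]

lemma exists_exponent_split_of_pow_mul_factorial_eq {m : ℕ} (hm : 1 ≤ m) {η : ℝ} (hη0 : 0 < η)
    (hη : η ^ m * m ! = m ^ m) : ∃ β, 0 < β ∧ β < η - β ∧ β * (m - 1) = m - η := by
  obtain rfl | hm2 := hm.eq_or_lt
  · refine ⟨η / 4, by positivity, by linarith, ?_⟩
    norm_num at hη
    simp [hη]
  have hm1 : (1 : ℝ) < m := by exact_mod_cast hm2
  have hfac : (1 : ℝ) < m ! := by exact_mod_cast Nat.one_lt_factorial.2 hm2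
  have hηm : η < m := by
    refine (pow_lt_pow_iff_left₀ hη0.le (by positivity) (by omega : m ≠ 0)).1 ?_
    rw [← hη]
    exact lt_mul_of_one_lt_right (by positivity) hfac
  have hηm' : 2 * m / (m + 1) < η := by
    refine (pow_lt_pow_iff_left₀ (by positivity) hη0.le (by omega : m ≠ 0)).1 ?_
    refine lt_of_mul_lt_mul_right ?_ (Nat.cast_nonneg (m !))
    calc (2 * m / (m + 1) : ℝ) ^ m * m ! < (2 * m / (m + 1)) ^ m * ((m + 1) / 2) ^ m := by
          gcongr; exact factorial_lt_half_succ_pow hm2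
      _ = η ^ m * m ! := by rw [hη, ← mul_pow]; congr 1; field_simp
  rw [div_lt_iff₀ (by positivity)] at hηm'
  refine ⟨(m - η) / (m - 1), div_pos (by linarith) (by linarith), ?_, ?_⟩
  · rw [lt_sub_iff_add_lt, ← two_mul, mul_div_assoc', div_lt_iff₀ (by linarith)]; linarith
  · field_simp [(by linarith : (m : ℝ) - 1 ≠ 0)]

noncomputable def erlangPDFReal (n : ℕ) (r t : ℝ) : ℝ :=
  r ^ n / (n - 1)! * t ^ (n - 1) * exp (-(r * t))

lemma continuous_erlangPDFReal (n : ℕ) (r : ℝ) : Continuous (erlangPDFReal n r) := by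
  unfold erlangPDFReal; fun_prop

lemma gammaPDFReal_natCast {n : ℕ} (hn : 1 ≤ n) (r : ℝ) {t : ℝ} (ht : 0 ≤ t) :
    gammaPDFReal n r t = erlangPDFReal n r t := by
  obtain ⟨k, rfl⟩ := Nat.exists_eq_add_of_le' hn
  rw [gammaPDFReal, if_pos ht, erlangPDFReal, Nat.add_sub_cancel, Nat.cast_succ,
    Gamma_nat_eq_factorial, add_sub_cancel_right, rpow_natCast, ← Nat.cast_succ, rpow_natCast]

lemma cdf_gammaMeasure_eq_intervalIntegral {a r : ℝ} (ha : 0 < a) (hr : 0 < r) {x : ℝ}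
    (hx : 0 ≤ x) : cdf (gammaMeasure a r) x = ∫ t in 0..x, gammaPDFReal a r t := by
  rw [cdf_gammaMeasure_eq_integral ha hr, intervalIntegral.integral_of_le hx,
    ← integral_Icc_eq_integral_Ioc, setIntegral_eq_of_subset_of_forall_sdiff_eq_zero
      measurableSet_Iic Icc_subset_Iic_self]
  rintro t ⟨htx, ht⟩
  exact if_neg fun h ↦ ht ⟨h, htx⟩

lemma cdf_gammaMeasure_natCast {n : ℕ} (hn : 1 ≤ n) {r : ℝ} (hr : 0 < r) {x : ℝ} (hx : 0 ≤ x) :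
    cdf (gammaMeasure n r) x = ∫ t in 0..x, erlangPDFReal n r t := by
  rw [cdf_gammaMeasure_eq_intervalIntegral (by exact_mod_cast hn) hr hx]
  refine intervalIntegral.integral_congr fun t ht ↦ gammaPDFReal_natCast hn r ?_
  rw [uIcc_of_le hx] at ht
  exact ht.1

lemma tendsto_integral_erlangPDFReal {n : ℕ} (hn : 1 ≤ n) {r : ℝ} (hr : 0 < r) :
    Tendsto (fun x ↦ ∫ t in 0..x, erlangPDFReal n r t) atTop (𝓝 1) :=
  (tendsto_cdf_atTop _).congr' <| (eventually_ge_atTop 0).mono fun _ hx ↦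
    cdf_gammaMeasure_natCast hn hr hx

lemma measureReal_lt_eq_one_sub_cdf {Ω : Type*} [MeasurableSpace Ω] {P : Measure Ω}
    [IsProbabilityMeasure P] {X : Ω → ℝ} (hX : Measurable X) (x : ℝ) :
    P.real {ω | x < X ω} = 1 - cdf (P.map X) x := by
  have : IsProbabilityMeasure (P.map X) := Measure.isProbabilityMeasure_map hX.aemeasurable
  rw [cdf_eq_real, ← probReal_compl_eq_one_sub measurableSet_Iic, compl_Iic,
    map_measureReal_apply hX measurableSet_Ioi]
  rfl

lemma erlangPDFReal_eq_mul_pow {m : ℕ} (hm : 1 ≤ m) {η β : ℝ} (hη : η ^ m * m ! = m ^ m)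
    (hβ : β * (m - 1) = m - η) (y : ℝ) :
    erlangPDFReal m m y = m * η * exp (-(η * y)) * (η * y * exp (-(β * y))) ^ (m - 1) := by
  obtain ⟨k, rfl⟩ := Nat.exists_eq_add_of_le' hm
  push_cast [Nat.factorial_succ] at hη hβ ⊢
  have hexp : exp (-((k + 1) * y)) = exp (-(η * y)) * exp (-(β * y)) ^ k := by
    rw [← exp_nat_mul, ← exp_add]; congr 1; linear_combination y * hβ
  rw [erlangPDFReal, Nat.add_sub_cancel, hexp, ← hη]
  field_simp
  ring

lemma exists_nonnegThenNonpos_erlangPDFReal_sub {m : ℕ} (hm : 1 ≤ m) {η : ℝ} (hη0 : 0 < η)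
    (hη : η ^ m * m ! = m ^ m) :
    ∃ x₀, NonnegThenNonpos (fun y ↦ erlangPDFReal m m y -
      m * (1 - exp (-(η * y))) ^ (m - 1) * (η * exp (-(η * y)))) 0 x₀ := by
  obtain ⟨β, hβ0, hβγ, hβ⟩ := exists_exponent_split_of_pow_mul_factorial_eq hm hη0 hη
  obtain ⟨x₀, hx₀⟩ := exists_nonnegThenNonpos_mul_add_exp_sub_exp hβ0 hβγ
  set A : ℝ → ℝ := fun y ↦ η * y * exp (-(β * y))
  set B : ℝ → ℝ := fun y ↦ 1 - exp (-(η * y))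
  have hsplit (y : ℝ) : erlangPDFReal m m y - m * B y ^ (m - 1) * (η * exp (-(η * y))) =
      m * η * exp (-(η * y)) * (A y ^ (m - 1) - B y ^ (m - 1)) := by
    rw [erlangPDFReal_eq_mul_pow hm hη hβ]; ring
  have hAB (y : ℝ) : A y - B y =
      exp (-(β * y)) * ((β + (η - β)) * y + exp (-(η - β) * y) - exp (β * y)) := by
    have h₁ : exp (-(β * y)) * exp (-(η - β) * y) = exp (-(η * y)) := by
      rw [← exp_add]; ring_nf
    have h₂ : exp (-(β * y)) * exp (β * y) = 1 := by rw [← exp_add]; simp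
    linear_combination h₂ - h₁
  have hA {y : ℝ} (hy : 0 ≤ y) : 0 ≤ A y := by positivity
  have hB {y : ℝ} (hy : 0 ≤ y) : 0 ≤ B y :=
    sub_nonneg.2 (exp_le_one_iff.2 (by nlinarith))
  refine ⟨x₀, hx₀.of_sign (fun y hy hq ↦ ?_) fun y hy hq ↦ ?_⟩ <;> beta_reduce at hq ⊢ <;>
    rw [hsplit]
  · have : B y ≤ A y := sub_nonneg.1 (hAB y ▸ mul_nonneg (exp_pos _).le hq)
    exact mul_nonneg (by positivity) (sub_nonneg.2 (pow_le_pow_left₀ (hB hy) this _))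
  · have : A y ≤ B y := sub_nonpos.1 (hAB y ▸ mul_nonpos_of_nonneg_of_nonpos (exp_pos _).le hq)
    exact mul_nonpos_of_nonneg_of_nonpos (by positivity)
      (sub_nonpos.2 (pow_le_pow_left₀ (hA hy) this _))

lemma one_sub_exp_pow_le_integral_erlangPDFReal {m : ℕ} (hm : 1 ≤ m) {η : ℝ} (hη0 : 0 < η)
    (hη : η ^ m * m ! = m ^ m) {x : ℝ} (hx : 0 ≤ x) :
    (1 - exp (-(η * x))) ^ m ≤ ∫ t in 0..x, erlangPDFReal m m t := by
  have hs (y : ℝ) : HasDerivAt (fun y ↦ 1 - exp (-(η * y))) (η * exp (-(η * y))) y := by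
    simpa using ((hasDerivAt_exp_mul (-η) y).const_sub 1)
  have hgap (y : ℝ) : HasDerivAt (fun y ↦ (∫ t in 0..y, erlangPDFReal m m t) -
      (1 - exp (-(η * y))) ^ m)
      (erlangPDFReal m m y - m * (1 - exp (-(η * y))) ^ (m - 1) * (η * exp (-(η * y)))) y :=
    (((continuous_erlangPDFReal m m).integral_hasStrictDerivAt 0 y).hasDerivAt).sub
      ((hs y).pow m)
  have hexp : Tendsto (fun y ↦ exp (-(η * y))) atTop (𝓝 0) :=
    tendsto_exp_neg_atTop_nhds_zero.comp (tendsto_id.const_mul_atTop hη0)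
  have hlim : Tendsto (fun y ↦ (∫ t in 0..y, erlangPDFReal m m t) - (1 - exp (-(η * y))) ^ m)
      atTop (𝓝 0) := by
    simpa using (tendsto_integral_erlangPDFReal hm (r := m) (by positivity)).sub
      ((tendsto_const_nhds (x := (1 : ℝ)).sub hexp).pow m)
  obtain ⟨x₀, hx₀⟩ := exists_nonnegThenNonpos_erlangPDFReal_sub hm hη0 hη
  have := nonneg_of_deriv_nonnegThenNonpos hgap hx₀ (by simp [Nat.one_le_iff_ne_zero.1 hm]) hlim hx
  linarith

lemma one_sub_one_sub_pow_eq_sum (m : ℕ) (t : ℝ) :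
    1 - (1 - t) ^ m = ∑ n ∈ Finset.Icc 1 m, (-1) ^ (n + 1) * (m.choose n : ℝ) * t ^ n := by
  rw [sub_eq_neg_add 1 t, add_pow, ← Nat.Ico_zero_eq_range, Finset.Ico_add_one_right_eq_Icc,
    ← Finset.insert_Icc_add_one_left_eq_Icc m.zero_le, Finset.sum_insert (by simp)]
  simp only [pow_zero, one_pow, Nat.choose_zero_right, Nat.cast_one, mul_one, zero_add,
    sub_add_cancel_left, ← Finset.sum_neg_distrib]
  refine Finset.sum_congr rfl fun n _ ↦ ?_
  rw [neg_pow]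
  ring

/-- Alzer's lemma, as used to bound the CCDF of the unit-mean Nakagami-`m` fading
power gain: if `X` is Gamma with integer shape `m ≥ 1` and rate `m`, and
`η = m·(m!)^{−1/m}`, then for every `x ≥ 0`,
`P(X > x) ≤ 1 − (1 − e^{−ηx})^m = Σ_{n=1}^{m} (−1)^{n+1} C(m,n) e^{−nηx}`. -/
theorem alzer_ccdf_bound
    {Ω' : Type*} [MeasureSpace Ω'] [IsProbabilityMeasure (ℙ : Measure Ω')]
    (m : ℕ) (hm : 1 ≤ m)
    (X : Ω' → ℝ) (hX : Measurable X)
    (hlaw : Measure.map X ℙ = gammaMeasure (m : ℝ) (m : ℝ))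
    (η : ℝ) (hη : η = (m : ℝ) * ((Nat.factorial m : ℝ)) ^ (-(1 / (m : ℝ)))) :
    ∀ x : ℝ, 0 ≤ x →
      (ℙ {ω | x < X ω}).toReal ≤ 1 - (1 - Real.exp (-(η * x))) ^ m ∧
      1 - (1 - Real.exp (-(η * x))) ^ m =
        ∑ n ∈ Finset.Icc 1 m,
          (-1 : ℝ) ^ (n + 1) * (m.choose n : ℝ) * Real.exp (-(n * η * x)) := by
  intro x hx
  have hη0 : 0 < η := by rw [hη]; positivity
  have hηm : η ^ m * m ! = m ^ m := by
    rw [hη]; exact mul_rpow_neg_inv_pow_mul (by positivity) _ (by omega)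
  refine ⟨?_, ?_⟩
  · have hccdf : (ℙ {ω | x < X ω}).toReal = 1 - ∫ t in 0..x, erlangPDFReal m m t := by
      rw [← measureReal_def, measureReal_lt_eq_one_sub_cdf hX, hlaw,
        cdf_gammaMeasure_natCast hm (by positivity) hx]
    rw [hccdf]
    linarith [one_sub_exp_pow_le_integral_erlangPDFReal hm hη0 hηm hx]
  · rw [one_sub_one_sub_pow_eq_sum]
    refine Finset.sum_congr rfl fun n _ ↦ ?_
    rw [← exp_nat_mul]; ring_nf
end
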